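/- The map φ defined on the Lie algebra of polynomial (or formal) vector fields in one variable by φ(f ∂ₓ, g ∂ₓ, h ∂ₓ) = det [[f(0), g(0), h(0)], [f'(0), g'(0), h'(0)], [f''(0), g''(0), h''(0)]] is a totally antisymmetric 3-cocycle: it satisfies the Chevalley–Eilenberg cocycle condition Σ_{i<j} (−1)^{i+j} φ([Xᵢ,Xⱼ], X₀,…,X̂ᵢ,…,X̂ⱼ,…,X₃) = 0 for all vector fields X₀,…,X₃, where [f∂ₓ, g∂ₓ] = (fg' − gf')∂ₓ. -/

import Mathlib

/- STATEMENT 6: The determinant 3-cochain φ(f∂ₓ,g∂ₓ,h∂ₓ) on formal vector fields on the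
line is a totally antisymmetric 3-cocycle: it satisfies the Chevalley–Eilenberg cocycle
condition Σ_{i<j} (−1)^{i+j} φ([Xᵢ,Xⱼ], X₀,…,X̂ᵢ,…,X̂ⱼ,…,X₃) = 0. -/

open PowerSeries

/-- W₁ = ℂ[[x]]∂ₓ : a formal vector field on the line is recorded by its coefficient f ∈ ℂ[[x]] -/
abbrev W1 := PowerSeries ℂ

/-- formal derivative f ↦ f' -/
noncomputable def D (f : W1) : W1 := PowerSeries.derivative ℂ f

/-- evaluation at the origin -/
noncomputable def ev0 (f : W1) : ℂ := PowerSeries.constantCoeff f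

/-- the bracket [f∂ₓ, g∂ₓ] = (fg' − f'g)∂ₓ of formal vector fields on the line -/
noncomputable def brW (f g : W1) : W1 := f * D g - D f * g

/-- the Gelfand–Fuks determinant 3-cochain
φ(f∂ₓ, g∂ₓ, h∂ₓ) = det [[f(0), g(0), h(0)], [f'(0), g'(0), h'(0)], [f''(0), g''(0), h''(0)]] -/
noncomputable def gfCocycle (f g h : W1) : ℂ :=
  Matrix.det !![ev0 f, ev0 g, ev0 h;
                ev0 (D f), ev0 (D g), ev0 (D h);
                ev0 (D (D f)), ev0 (D (D g)), ev0 (D (D h))]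

lemma D_sub (f g : W1) : D (f - g) = D f - D g := map_sub ..
lemma D_mul (f g : W1) : D (f * g) = D f * g + f * D g := by
  simp [D, Derivation.leibniz, smul_eq_mul]; ring
lemma D_add (f g : W1) : D (f + g) = D f + D g := map_add ..
lemma ev0_add (f g : W1) : ev0 (f + g) = ev0 f + ev0 g := map_add ..
lemma ev0_sub (f g : W1) : ev0 (f - g) = ev0 f - ev0 g := map_sub ..
lemma ev0_mul (f g : W1) : ev0 (f * g) = ev0 f * ev0 g := map_mul ..

lemma det3 (a b c d e f g h i : ℂ) :
    Matrix.det !![a,b,c;d,e,f;g,h,i] = a*e*i - a*f*h - b*d*i + b*f*g + c*d*h - c*e*g := by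
  simp [Matrix.det_fin_three]

theorem stmt6 :
    -- φ is totally antisymmetric …
    (∀ f g h : W1, gfCocycle f g h = -gfCocycle g f h) ∧
    (∀ f g h : W1, gfCocycle f g h = -gfCocycle f h g) ∧
    -- … and satisfies the Chevalley–Eilenberg 3-cocycle condition (trivial coefficients)
    (∀ X0 X1 X2 X3 : W1,
      - gfCocycle (brW X0 X1) X2 X3
      + gfCocycle (brW X0 X2) X1 X3
      - gfCocycle (brW X0 X3) X1 X2
      - gfCocycle (brW X1 X2) X0 X3
      + gfCocycle (brW X1 X3) X0 X2
      - gfCocycle (brW X2 X3) X0 X1 = 0) := by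
  refine ⟨fun f g h => ?_, fun f g h => ?_, fun X0 X1 X2 X3 => ?_⟩ <;>
    simp only [gfCocycle, brW, det3,
      D_sub, D_add, D_mul, ev0_sub, ev0_add, ev0_mul] <;> ring
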